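/- (Rosenthal's inequality) For every p > 2 there exists a constant C_p > 0, depending only on p, such that for every n ∈ ℕ and all independent real-valued random variables Y_1,…,Y_n with E[Y_i] = 0 and E[|Y_i|^p] < ∞ for each i, one has E[|Y_1 + ⋯ + Y_n|^p] ≤ C_p · max{ Σ_{i=1}^n E[|Y_i|^p], (Σ_{i=1}^n E[Y_i^2])^{p/2} }. -/

import Mathlib

/-!
Expanding `|x + y| ^ p` to second order gives
`|x + y| ^ p ≤ |x| ^ p + p |x| ^ (p - 2) x y + p² |x| ^ (p - 2) y² + (p + 1) ^ p |y| ^ p`.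
When a partial sum `S` is increased by an independent centred summand `Y`, the linear term has
mean zero and the quadratic one factorises, with `E |S| ^ (p - 2) ≤ (E |S| ^ p) ^ ((p - 2) / p)`
by Jensen. Telescoping, the largest `p`-th moment `F` of a partial sum satisfies
`F ≤ p² F ^ (1 - 2 / p) V + (p + 1) ^ p M` (with `V = ∑ E Y_i²`, `M = ∑ E |Y_i| ^ p`), and
Young's inequality absorbs the power of `F`: `F ≤ p ^ p V ^ (p / 2) + (p / 2) (p + 1) ^ p M`.
-/

open MeasureTheory ProbabilityTheory Real

lemma abs_one_add_rpow_le {p : ℝ} (hp : 1 < p) (t : ℝ) :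
    |1 + t| ^ p ≤ 1 + p * t + p ^ 2 * t ^ 2 + (p + 1) ^ p * |t| ^ p := by
  have hp0 : 0 < p := by linarith
  have htp : 0 ≤ (p + 1) ^ p * |t| ^ p := by positivity
  -- below `p |t| = 1` the tangent-line bound `|exp x - 1 - x| ≤ x ^ 2` applies to `x = p t`
  rcases le_or_gt (p * |t|) 1 with hsmall | hlarge
  · have ht : 0 < 1 + t := by
      have : |t| < 1 := by nlinarith [abs_nonneg t]
      linarith [neg_abs_le t]
    have hlog : log (1 + t) * p ≤ p * t := by
      nlinarith [log_le_sub_one_of_pos ht]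
    have hexp := abs_le.1 (abs_exp_sub_one_sub_id_le (x := p * t)
      (by rwa [abs_mul, abs_of_pos hp0]))
    calc |1 + t| ^ p = exp (log (1 + t) * p) := by rw [abs_of_pos ht, rpow_def_of_pos ht]
      _ ≤ exp (p * t) := exp_le_exp.2 hlog
      _ ≤ 1 + p * t + p ^ 2 * t ^ 2 := by linarith [hexp.2]
      _ ≤ _ := by linarith
  · have hle : |1 + t| ≤ (p + 1) * |t| := by
      linarith [abs_add_le 1 t, abs_one (α := ℝ)]
    have hpow : |1 + t| ^ p ≤ (p + 1) ^ p * |t| ^ p := by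
      rw [← mul_rpow (by linarith) (abs_nonneg t)]
      exact rpow_le_rpow (abs_nonneg _) hle hp0.le
    have hlin : -(p * t) ≤ p ^ 2 * t ^ 2 := by
      nlinarith [neg_abs_le t, sq_abs t, abs_nonneg t]
    linarith

lemma abs_add_rpow_le {p : ℝ} (hp : 1 < p) (x y : ℝ) :
    |x + y| ^ p ≤ |x| ^ p + p * (|x| ^ (p - 2) * x) * y + p ^ 2 * |x| ^ (p - 2) * y ^ 2
      + (p + 1) ^ p * |y| ^ p := by
  rcases eq_or_ne x 0 with rfl | hx
  · have : |y| ^ p ≤ (p + 1) ^ p * |y| ^ p :=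
      le_mul_of_one_le_left (by positivity) (one_le_rpow (by linarith) (by linarith))
    simp only [zero_add, abs_zero, zero_rpow (by linarith : p ≠ 0), mul_zero, zero_mul]
    nlinarith [rpow_nonneg le_rfl (p - 2 : ℝ), sq_nonneg (p * y)]
  have hx0 : 0 < |x| := abs_pos.2 hx
  have hxp : |x| ^ p = |x| ^ (p - 2) * x ^ 2 := by
    rw [← sq_abs, ← rpow_natCast, ← rpow_add hx0]
    norm_num
  have hsum : |x| ^ p * |1 + y / x| ^ p = |x + y| ^ p := by
    rw [← mul_rpow hx0.le (abs_nonneg _), ← abs_mul, mul_one_add, mul_div_cancel₀ _ hx]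
  have hy : |x| ^ p * |y / x| ^ p = |y| ^ p := by
    rw [← mul_rpow hx0.le (abs_nonneg _), ← abs_mul, mul_div_cancel₀ _ hx]
  have key := mul_le_mul_of_nonneg_left (abs_one_add_rpow_le hp (y / x)) (rpow_nonneg hx0.le p)
  rw [hsum] at key
  calc |x + y| ^ p ≤ _ := key
    _ = _ := by
      rw [mul_add, mul_left_comm, hy, hxp]
      field_simp

lemma abs_abs_rpow_mul_self {a : ℝ} (ha : a + 1 ≠ 0) (u : ℝ) :
    |(|u| ^ a * u)| = |u| ^ (a + 1) := by
  rw [abs_mul, abs_of_nonneg (rpow_nonneg (abs_nonneg u) a), rpow_add_one' (abs_nonneg u) ha]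

lemma le_rpow_add_of_le_rpow_mul_add {p F W B : ℝ} (hp : 2 < p) (hF : 0 ≤ F) (hW : 0 ≤ W)
    (h : F ≤ F ^ ((p - 2) / p) * W + B) : F ≤ W ^ (p / 2) + p / 2 * B := by
  have hp0 : 0 < p := by linarith
  -- weighted AM-GM with weights `(p - 2) / p` and `2 / p` (Young's inequality)
  have hyoung := geom_mean_le_arith_mean2_weighted (w₁ := (p - 2) / p) (w₂ := 2 / p)
    (div_nonneg (by linarith) hp0.le) (div_nonneg zero_le_two hp0.le) hF (rpow_nonneg hW (p / 2))
    (by field_simp; ring)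
  rw [← rpow_mul hW, div_mul_div_comm, mul_comm p 2, div_self (by positivity), rpow_one] at hyoung
  have hsplit : (p - 2) / p * F = F - 2 / p * F := by field_simp
  have key : 2 / p * F ≤ 2 / p * W ^ (p / 2) + B := by linarith
  calc F = p / 2 * (2 / p * F) := by field_simp
    _ ≤ p / 2 * (2 / p * W ^ (p / 2) + B) := by gcongr
    _ = W ^ (p / 2) + p / 2 * B := by field_simp

lemma Finset.le_apply_empty_add_sum_of_insert_le {ι M : Type*} [DecidableEq ι] [AddCommMonoid M]
    [PartialOrder M] [IsOrderedAddMonoid M] {f : Finset ι → M} {c : ι → M}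
    (h : ∀ a t, a ∉ t → f (insert a t) ≤ f t + c a) (s : Finset ι) :
    f s ≤ f ∅ + ∑ a ∈ s, c a := by
  induction s using Finset.induction_on with
  | empty => simp
  | insert a t ha ih =>
    calc f (insert a t) ≤ f t + c a := h a t ha
      _ ≤ f ∅ + ∑ i ∈ t, c i + c a := by gcongr
      _ = f ∅ + ∑ i ∈ insert a t, c i := by
        rw [Finset.sum_insert ha, add_comm (c a), add_assoc]

variable {Ω : Type*} [MeasurableSpace Ω] {μ : Measure Ω}

lemma MeasureTheory.MemLp.integrable_abs_rpow [IsFiniteMeasure μ] {f : Ω → ℝ} {p q : ℝ}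
    (hf : MemLp f (ENNReal.ofReal p) μ) (hq : 0 ≤ q) (hqp : q ≤ p) :
    Integrable (fun ω ↦ |f ω| ^ q) μ := by
  have := (hf.mono_exponent (ENNReal.ofReal_le_ofReal hqp)).integrable_norm_rpow'
  simpa [ENNReal.toReal_ofReal hq] using this

lemma MeasureTheory.MemLp.integrable_sq_of_two_le [IsFiniteMeasure μ] {f : Ω → ℝ} {p : ℝ}
    (hf : MemLp f (ENNReal.ofReal p) μ) (hp : 2 ≤ p) : Integrable (fun ω ↦ f ω ^ 2) μ :=
  (hf.mono_exponent (by simpa using ENNReal.ofReal_le_ofReal hp)).integrable_sq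

lemma memLp_ofReal_of_lintegral_abs_rpow_lt_top {f : Ω → ℝ} {p : ℝ}
    (hf : AEStronglyMeasurable f μ) (hp : 0 < p)
    (h : ∫⁻ ω, ENNReal.ofReal (|f ω| ^ p) ∂μ < ⊤) :
    MemLp f (ENNReal.ofReal p) μ := by
  rw [← integrable_norm_rpow_iff hf (by simpa using hp) ENNReal.ofReal_ne_top,
    ENNReal.toReal_ofReal hp.le]
  exact ⟨(hf.norm.aemeasurable.pow_const p).aestronglyMeasurable,
    (hasFiniteIntegral_iff_ofReal (ae_of_all _ fun _ ↦ by positivity)).2 (by simpa using h)⟩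

lemma integral_abs_rpow_le_rpow_integral [IsProbabilityMeasure μ] {f : Ω → ℝ} {q r : ℝ}
    (hq : 0 < q) (hqr : q ≤ r) (hf : MemLp f (ENNReal.ofReal r) μ) :
    ∫ ω, |f ω| ^ q ∂μ ≤ (∫ ω, |f ω| ^ r ∂μ) ^ (q / r) := by
  have hr : 0 < r := hq.trans_le hqr
  have hpow : ∀ ω, (|f ω| ^ r) ^ (q / r) = |f ω| ^ q := fun ω ↦ by
    rw [← rpow_mul (abs_nonneg _), mul_div_cancel₀ _ hr.ne']
  have := (concaveOn_rpow (div_pos hq hr).le ((div_le_one hr).2 hqr)).le_map_integral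
    (continuousOn_id.rpow_const fun _ _ ↦ Or.inr (div_pos hq hr).le) isClosed_Ici
    (ae_of_all _ fun ω ↦ rpow_nonneg (abs_nonneg (f ω)) r) (hf.integrable_abs_rpow hr.le le_rfl)
    (by simpa [Function.comp_def, hpow] using hf.integrable_abs_rpow hq.le hqr)
  simpa only [hpow] using this

lemma integral_abs_add_rpow_le [IsProbabilityMeasure μ] {p : ℝ} (hp : 2 < p) {S X : Ω → ℝ}
    (hS : MemLp S (ENNReal.ofReal p) μ) (hX : MemLp X (ENNReal.ofReal p) μ)
    (hSX : IndepFun S X μ) (hX0 : μ[X] = 0) :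
    ∫ ω, |S ω + X ω| ^ p ∂μ ≤ ∫ ω, |S ω| ^ p ∂μ
      + p ^ 2 * (∫ ω, |S ω| ^ p ∂μ) ^ ((p - 2) / p) * ∫ ω, X ω ^ 2 ∂μ
      + (p + 1) ^ p * ∫ ω, |X ω| ^ p ∂μ := by
  set φ : ℝ → ℝ := fun u ↦ |u| ^ (p - 2) * u
  set ψ : ℝ → ℝ := fun u ↦ |u| ^ (p - 2)
  have hψ : Continuous ψ := continuous_abs.rpow_const fun _ ↦ Or.inr (by linarith)
  have hφ : Continuous φ := hψ.mul continuous_id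
  have hSp := hS.integrable_abs_rpow (by linarith) le_rfl
  have hψS : Integrable (fun ω ↦ ψ (S ω)) μ :=
    hS.integrable_abs_rpow (by linarith) (by linarith)
  have hφS : Integrable (fun ω ↦ φ (S ω)) μ :=
    (hS.integrable_abs_rpow (q := p - 1) (by linarith) (by linarith)).mono'
      (hφ.comp_aestronglyMeasurable hS.1) (ae_of_all _ fun ω ↦ by
        rw [norm_eq_abs, abs_abs_rpow_mul_self (by linarith), show p - 2 + 1 = p - 1 by ring])
  have hX1 : Integrable X μ := hX.integrable (ENNReal.one_le_ofReal.2 (by linarith))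
  have hX2 := hX.integrable_sq_of_two_le hp.le
  have hXp := hX.integrable_abs_rpow (by linarith) le_rfl
  have h_cross : IndepFun (fun ω ↦ φ (S ω)) X μ := hSX.comp hφ.measurable measurable_id
  have h_sq : IndepFun (fun ω ↦ ψ (S ω)) (fun ω ↦ X ω ^ 2) μ :=
    hSX.comp hψ.measurable (measurable_id.pow_const 2)
  have hcross : ∫ ω, φ (S ω) * X ω ∂μ = 0 := by
    rw [h_cross.integral_fun_mul_eq_mul_integral hφS.1 hX1.1, hX0, mul_zero]
  have hsq :
      ∫ ω, ψ (S ω) * X ω ^ 2 ∂μ = (∫ ω, ψ (S ω) ∂μ) * ∫ ω, X ω ^ 2 ∂μ :=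
    h_sq.integral_fun_mul_eq_mul_integral hψS.1 hX2.1
  have hlyap : ∫ ω, ψ (S ω) ∂μ ≤ (∫ ω, |S ω| ^ p ∂μ) ^ ((p - 2) / p) :=
    integral_abs_rpow_le_rpow_integral (by linarith) (by linarith) hS
  have hint1 : Integrable (fun ω ↦ φ (S ω) * X ω) μ := h_cross.integrable_mul hφS hX1
  have hint2 : Integrable (fun ω ↦ ψ (S ω) * X ω ^ 2) μ := h_sq.integrable_mul hψS hX2
  calc ∫ ω, |S ω + X ω| ^ p ∂μ
      ≤ ∫ ω, (|S ω| ^ p + p * (φ (S ω) * X ω) + p ^ 2 * (ψ (S ω) * X ω ^ 2)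
          + (p + 1) ^ p * |X ω| ^ p) ∂μ := by
        refine integral_mono_of_nonneg (ae_of_all _ fun _ ↦ by positivity) (by fun_prop)
          (ae_of_all _ fun ω ↦ ?_)
        have := abs_add_rpow_le (by linarith : 1 < p) (S ω) (X ω)
        dsimp only [φ, ψ]
        linarith
    _ = ∫ ω, |S ω| ^ p ∂μ + p * ∫ ω, φ (S ω) * X ω ∂μ
          + p ^ 2 * ∫ ω, ψ (S ω) * X ω ^ 2 ∂μ
          + (p + 1) ^ p * ∫ ω, |X ω| ^ p ∂μ := by
        rw [integral_add (by fun_prop) (by fun_prop), integral_add (by fun_prop) (by fun_prop),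
          integral_add (by fun_prop) (by fun_prop), integral_const_mul, integral_const_mul,
          integral_const_mul]
    _ ≤ _ := by
        rw [hcross, hsq, mul_zero, add_zero, ← mul_assoc]
        gcongr

noncomputable def rosenthalConst (p : ℝ) : ℝ := p ^ p + p / 2 * (p + 1) ^ p

lemma rosenthalConst_pos {p : ℝ} (hp : 0 < p) : 0 < rosenthalConst p := by
  unfold rosenthalConst; positivity

-- The maximum runs over all sub-sums, not only initial segments of some order on `ι`.
noncomputable def maxPartialSumMoment {ι : Type*} [Fintype ι] (p : ℝ) (μ : Measure Ω)
    (Y : ι → Ω → ℝ) : ℝ :=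
  Finset.univ.sup' Finset.univ_nonempty fun s ↦ ∫ ω, |∑ i ∈ s, Y i ω| ^ p ∂μ

section IndependentSummands

variable {ι : Type*} {p : ℝ} {Y : ι → Ω → ℝ}

lemma integral_abs_sum_rpow_le_maxPartialSumMoment [Fintype ι] (s : Finset ι) :
    ∫ ω, |∑ i ∈ s, Y i ω| ^ p ∂μ ≤ maxPartialSumMoment p μ Y :=
  Finset.le_sup' (fun s ↦ ∫ ω, |∑ i ∈ s, Y i ω| ^ p ∂μ) (Finset.mem_univ s)

lemma maxPartialSumMoment_nonneg [Fintype ι] : 0 ≤ maxPartialSumMoment p μ Y :=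
  (integral_nonneg fun _ ↦ by positivity).trans (integral_abs_sum_rpow_le_maxPartialSumMoment ∅)

variable [IsProbabilityMeasure μ]

lemma integral_abs_sum_insert_rpow_le [DecidableEq ι] (hp : 2 < p)
    (hmeas : ∀ i, Measurable (Y i)) (hindep : iIndepFun Y μ) (hcent : ∀ i, μ[Y i] = 0)
    (hY : ∀ i, MemLp (Y i) (ENNReal.ofReal p) μ) {a : ι} {t : Finset ι} (ha : a ∉ t) :
    ∫ ω, |∑ i ∈ insert a t, Y i ω| ^ p ∂μ ≤ ∫ ω, |∑ i ∈ t, Y i ω| ^ p ∂μ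
      + p ^ 2 * (∫ ω, |∑ i ∈ t, Y i ω| ^ p ∂μ) ^ ((p - 2) / p) * ∫ ω, Y a ω ^ 2 ∂μ
      + (p + 1) ^ p * ∫ ω, |Y a ω| ^ p ∂μ := by
  have hindep_a := hindep.indepFun_finsetSum_of_notMem hmeas ha
  rw [Finset.sum_fn] at hindep_a
  simp_rw [Finset.sum_insert ha, add_comm (Y a _)]
  exact integral_abs_add_rpow_le hp (memLp_finsetSum t fun i _ ↦ hY i) (hY a) hindep_a
    (hcent a)

variable [Fintype ι]

lemma maxPartialSumMoment_le (hp : 2 < p) (hmeas : ∀ i, Measurable (Y i))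
    (hindep : iIndepFun Y μ) (hcent : ∀ i, μ[Y i] = 0)
    (hY : ∀ i, MemLp (Y i) (ENNReal.ofReal p) μ) :
    maxPartialSumMoment p μ Y ≤ maxPartialSumMoment p μ Y ^ ((p - 2) / p)
      * (p ^ 2 * ∑ i, ∫ ω, Y i ω ^ 2 ∂μ)
      + (p + 1) ^ p * ∑ i, ∫ ω, |Y i ω| ^ p ∂μ := by
  classical
  set F := maxPartialSumMoment p μ Y
  set f : Finset ι → ℝ := fun s ↦ ∫ ω, |∑ i ∈ s, Y i ω| ^ p ∂μ
  set c : ι → ℝ := fun i ↦ p ^ 2 * F ^ ((p - 2) / p) * ∫ ω, Y i ω ^ 2 ∂μ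
    + (p + 1) ^ p * ∫ ω, |Y i ω| ^ p ∂μ
  have hstep (a : ι) (s : Finset ι) (ha : a ∉ s) : f (insert a s) ≤ f s + c a := by
    have := integral_abs_sum_rpow_le_maxPartialSumMoment (p := p) (μ := μ) (Y := Y) s
    refine (integral_abs_sum_insert_rpow_le hp hmeas hindep hcent hY ha).trans ?_
    rw [add_assoc]
    dsimp only [c]
    gcongr
  have hF0 : 0 ≤ F := maxPartialSumMoment_nonneg
  have hf_empty : f ∅ = 0 := by simp [f, zero_rpow (by linarith : p ≠ 0)]
  obtain ⟨t, -, hFt⟩ := Finset.exists_mem_eq_sup' Finset.univ_nonempty f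
  calc F = f t := hFt
    _ ≤ ∑ i ∈ t, c i := by
      simpa [hf_empty] using Finset.le_apply_empty_add_sum_of_insert_le hstep t
    _ ≤ ∑ i, c i := Finset.sum_le_univ_sum_of_nonneg fun i ↦ by dsimp only [c]; positivity
    _ = _ := by
      simp only [c, Finset.sum_add_distrib, ← Finset.mul_sum]
      ring

theorem integral_abs_sum_rpow_le (hp : 2 < p) (hmeas : ∀ i, Measurable (Y i))
    (hindep : iIndepFun Y μ) (hcent : ∀ i, μ[Y i] = 0)
    (hY : ∀ i, MemLp (Y i) (ENNReal.ofReal p) μ) :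
    ∫ ω, |∑ i, Y i ω| ^ p ∂μ ≤ rosenthalConst p *
      max (∑ i, ∫ ω, |Y i ω| ^ p ∂μ) ((∑ i, ∫ ω, Y i ω ^ 2 ∂μ) ^ (p / 2)) := by
  set M := ∑ i, ∫ ω, |Y i ω| ^ p ∂μ
  set V := ∑ i, ∫ ω, Y i ω ^ 2 ∂μ
  have hV : 0 ≤ V := Finset.sum_nonneg fun i _ ↦ integral_nonneg fun _ ↦ sq_nonneg _
  have hpV : (p ^ 2 * V) ^ (p / 2) = p ^ p * V ^ (p / 2) := by
    rw [mul_rpow (by positivity) hV, ← rpow_natCast, ← rpow_mul (by linarith)]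
    congr 2
    push_cast
    ring
  calc ∫ ω, |∑ i, Y i ω| ^ p ∂μ ≤ maxPartialSumMoment p μ Y :=
        integral_abs_sum_rpow_le_maxPartialSumMoment Finset.univ
    _ ≤ (p ^ 2 * V) ^ (p / 2) + p / 2 * ((p + 1) ^ p * M) :=
      le_rpow_add_of_le_rpow_mul_add hp maxPartialSumMoment_nonneg (by positivity)
        (maxPartialSumMoment_le hp hmeas hindep hcent hY)
    _ ≤ rosenthalConst p * max M (V ^ (p / 2)) := by
      rw [hpV, rosenthalConst, add_mul, mul_assoc (p / 2)]
      gcongr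
      exacts [le_max_right _ _, le_max_left _ _]

end IndependentSummands

/-- Rosenthal's inequality. -/
theorem rosenthal_inequality (p : ℝ) (hp : 2 < p) :
    ∃ C : ℝ, 0 < C ∧
      ∀ (Ω : Type) (_ : MeasurableSpace Ω) (P : Measure Ω), IsProbabilityMeasure P →
      ∀ (n : ℕ) (Y : Fin n → Ω → ℝ),
        (∀ i, Measurable (Y i)) →
        iIndepFun Y P →
        (∀ i, ∫ ω, Y i ω ∂P = 0) →
        (∀ i, ∫⁻ ω, ENNReal.ofReal (|Y i ω| ^ p) ∂P < ⊤) →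
        ∫⁻ ω, ENNReal.ofReal (|∑ i, Y i ω| ^ p) ∂P ≤
          ENNReal.ofReal C *
            max (∑ i, ∫⁻ ω, ENNReal.ofReal (|Y i ω| ^ p) ∂P)
              ((∑ i, ∫⁻ ω, ENNReal.ofReal ((Y i ω) ^ 2) ∂P) ^ (p / 2)) := by
  have hp0 : 0 < p := by linarith
  refine ⟨rosenthalConst p, rosenthalConst_pos hp0,
    fun Ω _ P _ n Y hmeas hindep hcent hmom ↦ ?_⟩
  have hY (i : Fin n) : MemLp (Y i) (ENNReal.ofReal p) P :=
    memLp_ofReal_of_lintegral_abs_rpow_lt_top (hmeas i).aestronglyMeasurable hp0 (hmom i)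
  have hpow (f : Ω → ℝ) (hf : MemLp f (ENNReal.ofReal p) P) :
      ∫⁻ ω, ENNReal.ofReal (|f ω| ^ p) ∂P = ENNReal.ofReal (∫ ω, |f ω| ^ p ∂P) :=
    (ofReal_integral_eq_lintegral_ofReal (hf.integrable_abs_rpow hp0.le le_rfl)
      (ae_of_all _ fun _ ↦ by positivity)).symm
  have hsq (i : Fin n) :
      ∫⁻ ω, ENNReal.ofReal (Y i ω ^ 2) ∂P = ENNReal.ofReal (∫ ω, Y i ω ^ 2 ∂P) :=
    (ofReal_integral_eq_lintegral_ofReal ((hY i).integrable_sq_of_two_le hp.le)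
      (ae_of_all _ fun _ ↦ sq_nonneg _)).symm
  rw [hpow _ (memLp_finsetSum _ fun i _ ↦ hY i), Finset.sum_congr rfl fun i _ ↦ hpow _ (hY i),
    Finset.sum_congr rfl fun i _ ↦ hsq i,
    ← ENNReal.ofReal_sum_of_nonneg fun i _ ↦ integral_nonneg fun _ ↦ by positivity,
    ← ENNReal.ofReal_sum_of_nonneg fun i _ ↦ integral_nonneg fun _ ↦ sq_nonneg _,
    ENNReal.ofReal_rpow_of_nonneg
      (Finset.sum_nonneg fun i _ ↦ integral_nonneg fun _ ↦ sq_nonneg _) (by positivity),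
    ← ENNReal.ofReal_max, ← ENNReal.ofReal_mul (rosenthalConst_pos hp0).le]
  exact ENNReal.ofReal_le_ofReal (integral_abs_sum_rpow_le hp hmeas hindep hcent hY)
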